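/- Let A ⊆ B be a unital C*-inclusion and suppose E : B → A is a conditional expectation which is unique, i.e., every conditional expectation F : B → A equals E. Then for every self-adjoint x ∈ B commuting with every element of A, one has E(x²) = E(x)². -/

import Mathlib

/-!
If `c` commutes with `A` and `d = E (c⋆ c)` is invertible, then `w = d ^ (-1/2)` lies in `A` and
commutes with `A`, so `y ↦ E ((c w)⋆ y (c w)) = w E (c⋆ y c) w` is again a conditional expectation.
Uniqueness forces it to be `E`, which unwinds to `E (c⋆ y c) = E y * E (c⋆ c)`. For `c = 1 + s x`
with `s` real and small this reads
`E x + 2s E (x²) + s² E (x³) = E x + 2s (E x)² + s² E x E (x²)`,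
and comparing `s` with `-s` isolates `E (x²) = (E x)²`.
-/

open Matrix in
/-- A conditional expectation for a unital C*-inclusion `A ⊆ B`: a bounded linear map
`E : B → B` taking values in `A`, restricting to the identity on `A`, `A`-bimodular, and
completely positive (positive matrices over `B` are sent to positive matrices). -/
structure IsCondExp {B : Type*} [CStarAlgebra B]
    (A : StarSubalgebra ℂ B) (E : B → B) : Prop where
  boundedLinear : IsBoundedLinearMap ℂ E
  mem_of : ∀ x : B, E x ∈ A
  fixes : ∀ a ∈ A, E a = a
  bimodular : ∀ (x : B), ∀ a ∈ A, ∀ b ∈ A, E (a * x * b) = a * E x * b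
  completelyPositive : ∀ (n : ℕ) (M : Matrix (Fin n) (Fin n) B),
    (∃ N : Matrix (Fin n) (Fin n) B, M = Nᴴ * N) →
      ∃ P : Matrix (Fin n) (Fin n) B, M.map E = Pᴴ * P

open Matrix in
lemma Matrix.map_star_mul_mul_conjTranspose_mul_self {n R : Type*} [Fintype n] [DecidableEq n]
    [Semiring R] [StarRing R] (N : Matrix n n R) (c : R) :
    (Nᴴ * N).map (fun b => star c * b * c) =
      (N * diagonal fun _ => c)ᴴ * (N * diagonal fun _ => c) := by
  rw [conjTranspose_mul, diagonal_conjTranspose, Matrix.mul_assoc, ← Matrix.mul_assoc Nᴴ,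
    ← Matrix.mul_assoc]
  ext i j
  rw [mul_diagonal, diagonal_mul]
  rfl

lemma eq_zero_of_smul_add_sq_smul_eq_zero {K M : Type*} [Field K] [CharZero K] [AddCommGroup M]
    [Module K M] {t : K} (ht : t ≠ 0) {u v : M} (hpos : t • u + t ^ 2 • v = 0)
    (hneg : (-t) • u + (-t) ^ 2 • v = 0) : u = 0 := by
  have h : (2 * t) • u = 0 := by linear_combination (norm := module) hpos - hneg
  exact (smul_eq_zero.1 h).resolve_left (mul_ne_zero two_ne_zero ht)

open Filter Topology in
lemma Filter.Eventually.exists_ne_zero_and_neg {p : ℝ → Prop} (h : ∀ᶠ s in 𝓝 0, p s) :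
    ∃ t ≠ 0, p t ∧ p (-t) := by
  have h_neg : ∀ᶠ s in 𝓝 (0 : ℝ), p (-s) :=
    (continuous_neg.tendsto' (0 : ℝ) 0 neg_zero).eventually h
  obtain ⟨t, hp, ht⟩ :=
    (((h.and h_neg).filter_mono nhdsWithin_le_nhds).and self_mem_nhdsWithin).exists (f := 𝓝[≠] 0)
  exact ⟨t, ht, hp⟩

section Centralizer

variable {R B : Type*} [CommSemiring R] [StarRing R] [Semiring B] [StarRing B] [Algebra R B]
  [StarModule R B]

lemma StarSubalgebra.mem_centralizer_of_forall_mul_comm {A : StarSubalgebra R B} {x : B}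
    (hx : ∀ a ∈ A, x * a = a * x) : x ∈ StarSubalgebra.centralizer R (A : Set B) :=
  (StarSubalgebra.mem_centralizer_iff R).2 fun a ha => ⟨(hx a ha).symm, (hx _ (star_mem ha)).symm⟩

lemma StarSubalgebra.isClosed_centralizer [TopologicalSpace B] [SeparatelyContinuousMul B]
    [T2Space B] (s : Set B) : IsClosed (StarSubalgebra.centralizer R s : Set B) :=
  Set.isClosed_centralizer _

end Centralizer

section Order

variable {B : Type*} [CStarAlgebra B] [PartialOrder B] [StarOrderedRing B]

lemma CFC.rpow_mem_of_isClosed {S : StarSubalgebra ℂ B}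
    (hS : IsClosed (S : Set B)) {d : B} (hd : d ∈ S) (hd₀ : 0 ≤ d) (y : ℝ) : d ^ y ∈ S := by
  rw [CFC.rpow_eq_cfc_real]
  exact cfc_mem (hs := hS) _ hd

lemma CFC.rpow_neg_half_mul_rpow_neg_half_mul_self {d : B}
    (hd : IsStrictlyPositive d) : d ^ (-(1 / 2) : ℝ) * d ^ (-(1 / 2) : ℝ) * d = 1 := by
  rw [← CFC.rpow_add hd.isUnit]
  nth_rw 2 [← CFC.rpow_one d hd.nonneg]
  norm_num [CFC.rpow_neg_mul_rpow (1 : ℝ) hd]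

end Order

namespace IsCondExp

variable {B : Type*} [CStarAlgebra B] {A : StarSubalgebra ℂ B} {E : B → B}

lemma map_one (hE : IsCondExp A E) : E 1 = 1 := hE.fixes 1 (one_mem A)

lemma map_mul_left (hE : IsCondExp A E) {a : B} (ha : a ∈ A) (x : B) : E (a * x) = a * E x := by
  simpa using hE.bimodular x a ha 1 (one_mem A)

lemma map_mul_right (hE : IsCondExp A E) (x : B) {a : B} (ha : a ∈ A) : E (x * a) = E x * a := by
  simpa using hE.bimodular x 1 (one_mem A) a ha

lemma map_mem_centralizer (hE : IsCondExp A E) {y : B}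
    (hy : y ∈ StarSubalgebra.centralizer ℂ (A : Set B)) :
    E y ∈ StarSubalgebra.centralizer ℂ (A : Set B) := by
  refine StarSubalgebra.mem_centralizer_of_forall_mul_comm fun a ha => ?_
  rw [← hE.map_mul_right y ha, ← ((StarSubalgebra.mem_centralizer_iff ℂ).1 hy a ha).1,
    hE.map_mul_left ha]

lemma map_star_mul_self_nonneg [PartialOrder B] [StarOrderedRing B] (hE : IsCondExp A E)
    (y : B) : 0 ≤ E (star y * y) := by
  obtain ⟨P, hP⟩ := hE.completelyPositive 1 (.of fun _ _ => star y * y)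
    ⟨.of fun _ _ => y, by ext; simp [Matrix.mul_apply]⟩
  have h := congrFun₂ hP 0 0
  simp only [Matrix.map_apply, Matrix.of_apply, Matrix.mul_apply, Matrix.conjTranspose_apply,
    Finset.univ_unique, Fin.default_eq_zero, Finset.sum_singleton] at h
  exact h ▸ star_mul_self_nonneg _

open Matrix in
lemma conj (hE : IsCondExp A E) {c : B} (hc : c ∈ StarSubalgebra.centralizer ℂ (A : Set B))
    (hc₁ : E (star c * c) = 1) : IsCondExp A (fun x => E (star c * x * c)) where
  boundedLinear := (hE.boundedLinear.toContinuousLinearMap.comp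
    (ContinuousLinearMap.mulLeftRight ℂ B (star c) c)).isBoundedLinearMap
  mem_of _ := hE.mem_of _
  fixes a ha := by
    have hca := (StarSubalgebra.mem_centralizer_iff ℂ).1 (star_mem hc) a ha
    rw [← hca.1, mul_assoc, hE.map_mul_left ha, hc₁, mul_one]
  bimodular x a ha b hb := by
    have hca := (StarSubalgebra.mem_centralizer_iff ℂ).1 (star_mem hc) a ha
    have hcb := (StarSubalgebra.mem_centralizer_iff ℂ).1 hc b hb
    rw [← hE.bimodular _ a ha b hb]
    congr 1
    simp only [← mul_assoc, ← hca.1]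
    simp only [mul_assoc, hcb.1]
  completelyPositive n M := by
    rintro ⟨N, rfl⟩
    have h := Matrix.map_map (M := Nᴴ * N) (f := fun b => star c * b * c) (g := E)
    rw [Matrix.map_star_mul_mul_conjTranspose_mul_self] at h
    exact h ▸ hE.completelyPositive n _ ⟨_, rfl⟩

lemma map_conj_one_add_smul_sub_mul_map (hE : IsCondExp A E) (x : B) (s : ℂ) :
    E ((1 + s • x) * x * (1 + s • x)) - E x * E ((1 + s • x) * (1 + s • x)) =
      s • ((2 : ℂ) • (E (x ^ 2) - E x ^ 2)) + s ^ 2 • (E (x ^ 3) - E x * E (x ^ 2)) := by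
  let Φ : B →ₗ[ℂ] B := IsLinearMap.mk' E hE.boundedLinear.toIsLinearMap
  change Φ _ - Φ x * Φ _ =
    s • ((2 : ℂ) • (Φ (x ^ 2) - Φ x ^ 2)) + s ^ 2 • (Φ (x ^ 3) - Φ x * Φ (x ^ 2))
  have h₁ : (1 + s • x) * x * (1 + s • x) = x + (2 * s) • x ^ 2 + s ^ 2 • x ^ 3 := by
    simp only [add_mul, mul_add, smul_mul_assoc, mul_smul_comm, one_mul, mul_one, pow_succ,
      pow_zero]
    module
  have h₂ : (1 + s • x) * (1 + s • x) = 1 + (2 * s) • x + s ^ 2 • x ^ 2 := by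
    simp only [add_mul, mul_add, smul_mul_assoc, mul_smul_comm, one_mul, mul_one, pow_succ,
      pow_zero]
    module
  have hΦ₁ : Φ 1 = 1 := hE.map_one
  rw [h₁, h₂]
  simp only [map_add, map_smul, hΦ₁, mul_add, mul_one, mul_smul_comm, pow_two]
  module

lemma map_star_mul_mul_eq_mul_map_of_unique (hA : IsClosed (A : Set B)) (hE : IsCondExp A E)
    (huniq : ∀ F : B → B, IsCondExp A F → F = E) {c : B}
    (hc : c ∈ StarSubalgebra.centralizer ℂ (A : Set B)) (hd : IsUnit (E (star c * c))) (y : B) :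
    E (star c * y * c) = E y * E (star c * c) := by
  let _ := CStarAlgebra.spectralOrder B
  have := CStarAlgebra.spectralOrderedRing B
  set d := E (star c * c)
  have hd₀ : 0 ≤ d := hE.map_star_mul_self_nonneg c
  have hdA' : d ∈ StarSubalgebra.centralizer ℂ (A : Set B) :=
    hE.map_mem_centralizer (mul_mem (star_mem hc) hc)
  set w := d ^ (-(1 / 2) : ℝ)
  have hwA : w ∈ A := CFC.rpow_mem_of_isClosed hA (hE.mem_of _) hd₀ _
  have hwA' : w ∈ StarSubalgebra.centralizer ℂ (A : Set B) :=
    CFC.rpow_mem_of_isClosed (StarSubalgebra.isClosed_centralizer _) hdA' hd₀ _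
  have hw : w * w * d = 1 := CFC.rpow_neg_half_mul_rpow_neg_half_mul_self ⟨hd₀, hd⟩
  have hw_comm {a : B} (ha : a ∈ A) : w * a = a * w :=
    ((StarSubalgebra.mem_centralizer_iff ℂ).1 hwA' a ha).1.symm
  have hconj (x : B) : E (star (c * w) * x * (c * w)) = w * E (star c * x * c) * w := by
    rw [star_mul, CFC.rpow_nonneg.isSelfAdjoint.star_eq, ← hE.bimodular _ w hwA w hwA]
    simp only [mul_assoc]
  have hF : IsCondExp A fun x => E (star (c * w) * x * (c * w)) := by
    refine hE.conj (mul_mem hc hwA') ?_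
    rw [← mul_one (star (c * w)), hconj, mul_one, mul_assoc, ← hw_comm (hE.mem_of _),
      ← mul_assoc, hw]
  have hEy : w * E (star c * y * c) * w = E y := by
    rw [← hconj]; exact congrFun (huniq _ hF) y
  calc E (star c * y * c) = E (star c * y * c) * (w * w * d) := by rw [hw, mul_one]
    _ = w * E (star c * y * c) * w * d := by
      rw [hw_comm (hE.mem_of _)]; simp only [mul_assoc]
    _ = E y * d := by rw [hEy]

end IsCondExp

/-- If a unital C*-inclusion `A ⊆ B` admits a unique conditional expectation `E`, then
`E (x ^ 2) = (E x) ^ 2` for every self-adjoint `x ∈ B` commuting with every element of `A`. -/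
theorem unique_condExp_sq_of_selfAdjoint_commutant
    {B : Type*} [CStarAlgebra B] (A : StarSubalgebra ℂ B)
    (hA : IsClosed (A : Set B)) (E : B → B) (hE : IsCondExp A E)
    (huniq : ∀ F : B → B, IsCondExp A F → F = E) :
    ∀ x : B, IsSelfAdjoint x → (∀ a ∈ A, x * a = a * x) →
      E (x ^ 2) = (E x) ^ 2 := by
  intro x hx hxA
  let c : ℝ → B := fun s => 1 + (s : ℂ) • x
  have hc_star (s : ℝ) : star (c s) = c s := by simp [c, hx.star_eq]
  have hc (s : ℝ) : c s ∈ StarSubalgebra.centralizer ℂ (A : Set B) :=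
    add_mem (one_mem _) (SMulMemClass.smul_mem _
      (StarSubalgebra.mem_centralizer_of_forall_mul_comm hxA))
  have h_cont : Continuous fun s => E (star (c s) * c s) :=
    hE.boundedLinear.continuous.comp (by fun_prop)
  have h_unit : ∀ᶠ s in nhds 0, IsUnit (E (star (c s) * c s)) :=
    h_cont.continuousAt.eventually_mem (Units.isOpen.mem_nhds (by simp [c, hE.map_one]))
  have key (s : ℝ) (hs : IsUnit (E (star (c s) * c s))) :
      (s : ℂ) • ((2 : ℂ) • (E (x ^ 2) - E x ^ 2)) + (s : ℂ) ^ 2 • (E (x ^ 3) - E x * E (x ^ 2))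
        = 0 := by
    rw [← hE.map_conj_one_add_smul_sub_mul_map, sub_eq_zero]
    have h := hE.map_star_mul_mul_eq_mul_map_of_unique hA huniq (hc s) hs x
    rwa [hc_star] at h
  obtain ⟨t, ht, ht_pos, ht_neg⟩ := h_unit.exists_ne_zero_and_neg
  have h := eq_zero_of_smul_add_sq_smul_eq_zero (by exact_mod_cast ht) (key t ht_pos)
    (by simpa using key (-t) ht_neg)
  exact sub_eq_zero.1 ((smul_eq_zero.1 h).resolve_left two_ne_zero)
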